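/- arXiv:1306.6182 — 5 statements merged into one kernel-verified Lean document; each statement's English description precedes it below -/
import Mathlib

section
/- For 0 < k < 1, with k' = √(1-k²), the complete elliptic integral of the first kind satisfies K(k) > (1 + k'²/4)·log(4/k') − k'²/4. -/
/-!
Put `a = √(1 - sin θ)` and `b = √(1 + sin θ)`, so that `a' = -b/2`, `b' = a/2`, `a² + b² = 2`, and,
with `q = k'²/4`, the integrand of `K(k)` is `1/√(a²b² + q(b² - a²)²)`. Since `t ↦ t^(-1/2)` is
convex, the integrand dominates its tangent-line approximation at `b²(a² + qb²)`, up to a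
nonpositive correction; the resulting function `ellKMinorant` has the elementary primitive
`ellKPrimitive`. Hence `K(k)` is at least the increment of `ellKPrimitive` from `θ = 0` to `π/2`,
and with `S = √(1 + q)` and `log x ≥ 1 - 1/x`, this increment exceeds the stated bound by at least
`(S - 1)²(7S² + 9S + 4)/(4S(S + 1)) > 0`.
-/

open Real

/-- Complete elliptic integral of the first kind. -/
noncomputable def ellK (k : ℝ) : ℝ :=
  ∫ θ in (0:ℝ)..(π/2), 1 / Real.sqrt (1 - k^2 * (Real.sin θ)^2)

open Set

theorem lt_sqrt_sq_add_mul_sq {q a b : ℝ} (hq : 0 < q) (hb : b ≠ 0) :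
    a < √(a ^ 2 + q * b ^ 2) := by
  calc a ≤ |a| := le_abs_self a
    _ = √(a ^ 2) := (sqrt_sq_eq_abs a).symm
    _ < √(a ^ 2 + q * b ^ 2) := by
      gcongr
      have := pow_pos (abs_pos.2 hb) 2
      rw [sq_abs] at this
      nlinarith

/-- The tangent line of `t ↦ t ^ (-1/2)` at `y²`, evaluated at `x²`. -/
theorem inv_add_sq_sub_sq_div_le_inv {x y : ℝ} (hx : 0 < x) (hy : 0 < y) :
    1 / y + (y ^ 2 - x ^ 2) / (2 * y ^ 3) ≤ 1 / x := by
  rw [div_add_div _ _ hy.ne' (by positivity), div_le_div_iff₀ (by positivity) hx]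
  nlinarith [mul_nonneg (mul_nonneg (sq_nonneg (y - x)) (by positivity : (0:ℝ) ≤ 2 * y + x))
    (pow_pos hy 2).le]

theorem cos_eq_sqrt_one_sub_sin_mul_sqrt_one_add_sin {θ : ℝ} (h : 0 ≤ cos θ) :
    cos θ = √(1 - sin θ) * √(1 + sin θ) := by
  rw [← sqrt_mul (by linarith [sin_le_one θ]), ← sqrt_sq h, cos_sq']
  ring_nf

theorem hasDerivAt_sqrt_one_sub_sin {θ : ℝ} (h : 0 < cos θ) :
    HasDerivAt (fun t => √(1 - sin t)) (-√(1 + sin θ) / 2) θ := by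
  have hsin : sin θ < 1 := by nlinarith [sin_sq_add_cos_sq θ]
  have hne : √(1 - sin θ) ≠ 0 := (sqrt_pos.2 (by linarith)).ne'
  refine ((hasDerivAt_sin θ).const_sub 1 |>.sqrt (by linarith)).congr_deriv ?_
  rw [cos_eq_sqrt_one_sub_sin_mul_sqrt_one_add_sin h.le]
  field_simp

theorem hasDerivAt_sqrt_one_add_sin {θ : ℝ} (h : 0 < cos θ) :
    HasDerivAt (fun t => √(1 + sin t)) (√(1 - sin θ) / 2) θ := by
  have hsin : -1 < sin θ := by nlinarith [sin_sq_add_cos_sq θ]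
  have hne : √(1 + sin θ) ≠ 0 := (sqrt_pos.2 (by linarith)).ne'
  refine ((hasDerivAt_sin θ).const_add 1 |>.sqrt (by linarith)).congr_deriv ?_
  rw [cos_eq_sqrt_one_sub_sin_mul_sqrt_one_add_sin h.le]
  field_simp

noncomputable def ellKPrimitive (q a b : ℝ) : ℝ :=
  (1 + q) * log (√(a ^ 2 + q * b ^ 2) - a) - (1 + q) * log b
    + q * a / √(a ^ 2 + q * b ^ 2) + q / (2 * b ^ 2)

noncomputable def ellKMinorant (q a b : ℝ) : ℝ :=
  1 / (b * √(a ^ 2 + q * b ^ 2)) + q * a ^ 2 / (b * √(a ^ 2 + q * b ^ 2) ^ 3) - q * a / (2 * b ^ 3)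

theorem ellKMinorant_le {q a b : ℝ} (hq : 0 < q) (ha : 0 ≤ a) (hb : 0 < b) :
    ellKMinorant q a b ≤ 1 / √(a ^ 2 * b ^ 2 + q * (b ^ 2 - a ^ 2) ^ 2) := by
  have hpos : 0 < a ^ 2 + q * b ^ 2 := by positivity
  have hA : 0 < a ^ 2 * b ^ 2 + q * (b ^ 2 - a ^ 2) ^ 2 := by
    rcases ha.eq_or_lt with rfl | ha
    · norm_num
      positivity
    · have : 0 ≤ q * (b ^ 2 - a ^ 2) ^ 2 := by positivity
      have : 0 < a ^ 2 * b ^ 2 := by positivity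
      linarith
  unfold ellKMinorant
  set e := √(a ^ 2 + q * b ^ 2)
  set x := √(a ^ 2 * b ^ 2 + q * (b ^ 2 - a ^ 2) ^ 2)
  have he2 : e ^ 2 = a ^ 2 + q * b ^ 2 := sq_sqrt hpos.le
  have hx2 : x ^ 2 = a ^ 2 * b ^ 2 + q * (b ^ 2 - a ^ 2) ^ 2 := sq_sqrt hA.le
  have he0 : 0 < e := sqrt_pos.2 hpos
  have hx0 : 0 < x := sqrt_pos.2 hA
  have hae : a ≤ e := (lt_sqrt_sq_add_mul_sq hq hb.ne').le
  have hsplit : 1 / (b * e) + q * a ^ 2 / (b * e ^ 3) - q * a / (2 * b ^ 3)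
      = (1 / (b * e) + ((b * e) ^ 2 - x ^ 2) / (2 * (b * e) ^ 3))
        + q / (2 * b ^ 3) * (a ^ 4 / e ^ 3 - a) := by
    rw [hx2]
    field_simp
    linear_combination (-b ^ 2) * he2
  have htangent := inv_add_sq_sub_sq_div_le_inv hx0 (mul_pos hb he0)
  have hcorr : a ^ 4 / e ^ 3 ≤ a := by
    rw [div_le_iff₀ (by positivity)]
    calc a ^ 4 = a * a ^ 3 := by ring
      _ ≤ a * e ^ 3 := by gcongr
  rw [hsplit]
  nlinarith [mul_nonpos_of_nonneg_of_nonpos (by positivity : 0 ≤ q / (2 * b ^ 3))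
    (sub_nonpos.2 hcorr)]

theorem hasDerivAt_ellKPrimitive_comp {a b : ℝ → ℝ} {q θ : ℝ} (hq : 0 < q) (hbθ : 0 < b θ)
    (hab : a θ ^ 2 + b θ ^ 2 = 2) (ha : HasDerivAt a (-b θ / 2) θ) (hb : HasDerivAt b (a θ / 2) θ) :
    HasDerivAt (fun t => ellKPrimitive q (a t) (b t)) (ellKMinorant q (a θ) (b θ)) θ := by
  have hpos : 0 < a θ ^ 2 + q * b θ ^ 2 := by positivity
  have hae : 0 < √(a θ ^ 2 + q * b θ ^ 2) - a θ := sub_pos.2 (lt_sqrt_sq_add_mul_sq hq hbθ.ne')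
  have ha2 : HasDerivAt (fun t => a t ^ 2) (-(a θ * b θ)) θ :=
    (ha.fun_pow 2).congr_deriv (by norm_num; ring)
  have hb2 : HasDerivAt (fun t => b t ^ 2) (a θ * b θ) θ :=
    (hb.fun_pow 2).congr_deriv (by norm_num; ring)
  have he : HasDerivAt (fun t => √(a t ^ 2 + q * b t ^ 2))
      ((q - 1) * (a θ * b θ) / (2 * √(a θ ^ 2 + q * b θ ^ 2))) θ := by
    convert (ha2.fun_add (hb2.const_mul q)).sqrt hpos.ne' using 2; ring
  have hG : HasDerivAt (fun t => ellKPrimitive q (a t) (b t)) _ θ :=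
    ((((he.fun_sub ha).log hae.ne').const_mul (1 + q)).fun_sub
      ((hb.log hbθ.ne').const_mul (1 + q))).fun_add ((ha.const_mul q).fun_div he (by positivity))
      |>.fun_add ((hasDerivAt_const θ q).fun_div (hb2.const_mul 2) (by positivity))
  refine hG.congr_deriv ?_
  simp only [ellKMinorant]
  have he2 : √(a θ ^ 2 + q * b θ ^ 2) ^ 2 = a θ ^ 2 + q * b θ ^ 2 := sq_sqrt hpos.le
  have he0 : 0 < √(a θ ^ 2 + q * b θ ^ 2) := sqrt_pos.2 hpos
  clear hG he ha2 hb2 ha hb hpos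
  generalize √(a θ ^ 2 + q * b θ ^ 2) = e at *
  generalize a θ = x at *
  generalize b θ = y at *
  have hlogs : ((q - 1) * (x * y) / (2 * e) - -y / 2) / (e - x) - x / 2 / y = 1 / (y * e) := by
    field_simp
    linear_combination (-x) * he2 + (e - x) * hab
  have hquot : (q * (-y / 2) * e - q * x * ((q - 1) * (x * y) / (2 * e))) / e ^ 2
      = -(q ^ 2 * y / e ^ 3) := by
    field_simp
    linear_combination (-1) * he2 - q * hab
  calc _ = (1 + q) * (((q - 1) * (x * y) / (2 * e) - -y / 2) / (e - x) - x / 2 / y)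
        + (q * (-y / 2) * e - q * x * ((q - 1) * (x * y) / (2 * e))) / e ^ 2
        - q * x / (2 * y ^ 3) := by
        field_simp; ring
    _ = _ := by
      rw [hlogs, hquot]
      field_simp
      linear_combination 2 * y ^ 2 * q * he2

theorem continuousAt_ellKPrimitive_comp {a b : ℝ → ℝ} {q θ : ℝ} (hq : 0 < q) (hbθ : 0 < b θ)
    (ha : ContinuousAt a θ) (hb : ContinuousAt b θ) :
    ContinuousAt (fun t => ellKPrimitive q (a t) (b t)) θ := by
  have hpos : 0 < a θ ^ 2 + q * b θ ^ 2 := by positivity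
  have hae : √(a θ ^ 2 + q * b θ ^ 2) - a θ ≠ 0 :=
    (sub_pos.2 (lt_sqrt_sq_add_mul_sq hq hbθ.ne')).ne'
  have he : √(a θ ^ 2 + q * b θ ^ 2) ≠ 0 := (sqrt_pos.2 hpos).ne'
  have hb2 : 2 * b θ ^ 2 ≠ 0 := by positivity
  unfold ellKPrimitive
  fun_prop (disch := first | assumption | exact hbθ.ne')

theorem ellKPrimitive_sub_le_ellK {k : ℝ} (hk : k ^ 2 < 1) :
    ellKPrimitive ((1 - k ^ 2) / 4) 0 √2 - ellKPrimitive ((1 - k ^ 2) / 4) 1 1 ≤ ellK k := by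
  set q := (1 - k ^ 2) / 4 with hq_def
  have hq : 0 < q := by positivity
  have hcont :
      ContinuousOn (fun t => ellKPrimitive q √(1 - sin t) √(1 + sin t)) (Icc 0 (π / 2)) := by
    intro θ hθ
    have : 0 ≤ sin θ := sin_nonneg_of_nonneg_of_le_pi hθ.1 (by linarith [hθ.2, pi_pos])
    exact (continuousAt_ellKPrimitive_comp (a := fun t => √(1 - sin t)) (b := fun t => √(1 + sin t))
      hq (sqrt_pos.2 (by linarith)) (by fun_prop) (by fun_prop)).continuousWithinAt
  have hderiv : ∀ θ ∈ Ioo 0 (π / 2),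
      HasDerivAt (fun t => ellKPrimitive q √(1 - sin t) √(1 + sin t))
        (ellKMinorant q √(1 - sin θ) √(1 + sin θ)) θ := by
    intro θ hθ
    have hcos : 0 < cos θ := cos_pos_of_mem_Ioo ⟨by linarith [hθ.1, pi_pos], hθ.2⟩
    have hsin : 0 < sin θ := sin_pos_of_pos_of_lt_pi hθ.1 (by linarith [hθ.2, pi_pos])
    refine hasDerivAt_ellKPrimitive_comp (a := fun t => √(1 - sin t)) (b := fun t => √(1 + sin t))
      hq (sqrt_pos.2 ?_) ?_ (hasDerivAt_sqrt_one_sub_sin hcos) (hasDerivAt_sqrt_one_add_sin hcos)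
    · linarith
    · rw [sq_sqrt (by linarith [sin_le_one θ]), sq_sqrt (by linarith)]
      ring
  have hint :
      MeasureTheory.IntegrableOn (fun θ => 1 / √(1 - k ^ 2 * sin θ ^ 2)) (Icc 0 (π / 2)) := by
    have hpos (θ : ℝ) : 0 < 1 - k ^ 2 * sin θ ^ 2 := by
      nlinarith [sin_sq_le_one θ, sq_nonneg k, sq_nonneg (sin θ)]
    exact (continuous_const.div (by fun_prop) fun θ => (sqrt_pos.2 (hpos θ)).ne').integrableOn_Icc
  have hle : ∀ θ ∈ Ioo 0 (π / 2),
      ellKMinorant q √(1 - sin θ) √(1 + sin θ) ≤ 1 / √(1 - k ^ 2 * sin θ ^ 2) := by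
    intro θ hθ
    have hsin : 0 < sin θ := sin_pos_of_pos_of_lt_pi hθ.1 (by linarith [hθ.2, pi_pos])
    calc _ ≤ _ := ellKMinorant_le hq (sqrt_nonneg _) (sqrt_pos.2 (by linarith))
      _ = 1 / √(1 - k ^ 2 * sin θ ^ 2) := by
        rw [sq_sqrt (by linarith [sin_le_one θ]), sq_sqrt (by linarith), hq_def]
        ring_nf
  simpa [sin_pi_div_two, one_add_one_eq_two, ellK] using
    intervalIntegral.sub_le_integral_of_hasDeriv_right_of_le (by positivity) hcont
      (fun θ hθ => (hderiv θ hθ).hasDerivWithinAt) hint hle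

theorem ellKPrimitive_zero_sqrt_two {q : ℝ} (hq : 0 < q) :
    ellKPrimitive q 0 √2 = (1 + q) / 2 * log q + q / 4 := by
  have h2q : √(2 * q) = √2 * √q := sqrt_mul zero_le_two q
  simp only [ellKPrimitive, sq_sqrt zero_le_two]
  rw [zero_pow two_ne_zero, zero_add, sub_zero, mul_comm q 2, h2q,
    log_mul (by positivity) (by positivity), log_sqrt hq.le]
  ring

theorem ellKPrimitive_one_one (q : ℝ) :
    ellKPrimitive q 1 1 = (1 + q) * log (√(1 + q) - 1) + q / √(1 + q) + q / 2 := by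
  simp only [ellKPrimitive]
  norm_num

theorem log_bound_lt_ellKPrimitive_sub {q : ℝ} (hq : 0 < q) :
    (1 + q) * log (2 / √q) - q < ellKPrimitive q 0 √2 - ellKPrimitive q 1 1 := by
  rw [ellKPrimitive_zero_sqrt_two hq, ellKPrimitive_one_one]
  set S := √(1 + q)
  have hS2 : S ^ 2 = 1 + q := sq_sqrt (by linarith)
  have hS1 : 1 < S := by nlinarith [sqrt_nonneg (1 + q)]
  have hlogS : log (S - 1) = log q - log (S + 1) := by
    rw [eq_sub_iff_add_eq, ← log_mul (by linarith) (by linarith)]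
    congr 1
    linear_combination hS2
  have hlog2 : log (2 / √q) = log 2 - log q / 2 := by
    rw [log_div two_ne_zero (sqrt_pos.2 hq).ne', log_sqrt hq.le]
  have hlogS2 : 1 - ((S + 1) / 2)⁻¹ ≤ log (S + 1) - log 2 := by
    rw [← log_div (by linarith) two_ne_zero]
    exact one_sub_inv_le_log_of_pos (by linarith)
  have hpoly : 0 < (1 + q) * (1 - ((S + 1) / 2)⁻¹) + 3 * q / 4 - q / S := by
    have hq' : q = S ^ 2 - 1 := by linarith
    have : (1 + q) * (1 - ((S + 1) / 2)⁻¹) + 3 * q / 4 - q / S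
        = (S - 1) ^ 2 * (7 * S ^ 2 + 9 * S + 4) / (4 * S * (S + 1)) := by
      rw [hq']
      field_simp
      ring
    rw [this]
    have := sub_pos.2 hS1
    positivity
  rw [hlogS, hlog2]
  nlinarith [mul_le_mul_of_nonneg_left hlogS2 (by linarith : (0:ℝ) ≤ 1 + q)]

theorem ellK_gt_log_bound (k : ℝ) (hk0 : 0 < k) (hk1 : k < 1) :
    ellK k > (1 + (Real.sqrt (1 - k^2))^2 / 4) * Real.log (4 / Real.sqrt (1 - k^2))
      - (Real.sqrt (1 - k^2))^2 / 4 := by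
  have hk : k ^ 2 < 1 := by nlinarith
  set q := (1 - k ^ 2) / 4 with hq_def
  have hq : 0 < q := by positivity
  have hsq : √(1 - k ^ 2) ^ 2 = 4 * q := by rw [sq_sqrt (by linarith)]; ring
  have hdiv : 4 / √(1 - k ^ 2) = 2 / √q := by
    rw [show 1 - k ^ 2 = 2 ^ 2 * q by rw [hq_def]; ring, sqrt_mul (by positivity),
      sqrt_sq zero_le_two]
    field_simp
    norm_num
  rw [gt_iff_lt, hsq, hdiv]
  calc _ = (1 + q) * log (2 / √q) - q := by ring
    _ < _ := log_bound_lt_ellKPrimitive_sub hq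
    _ ≤ ellK k := ellKPrimitive_sub_le_ellK hk
end

section
/- For 0 < k < 1, with k' = √(1-k²), the complete elliptic integral of the first kind satisfies K(k) < (1 + k'²/4)·log(4/k'). -/
open Real

/-!
Write the integrand as `1 / √(cos² θ + k'² sin² θ)` and split `[0, π/2]` at `arctan (1 / √k')`.
On the left piece substitute `v = √k' tan θ`, on the right piece (after `θ ↦ π/2 - θ`)
`v = tan θ / √k'`. Bounding `(1 + x)^(-1/2)` by its second Taylor polynomial, each piece is at
most `∫₀¹ (1 - k'v²/2 + 3k'²v⁴/8) / √(v² + k') dv`, which has an elementary closed form. Twice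
that closed form is compared with `(1 + k'²/4) log (4/k')` through
`√(1 + k') ≤ 1 + k'/2 - k'²/8 + k'³/16`, tangent-line bounds for `log` and `log 2 < 7/10`,
leaving a polynomial inequality on `(0, 1]`.
-/

open Set MeasureTheory intervalIntegral

theorem integral_le_integral_of_le_comp_mul_deriv {f g φ φ' : ℝ → ℝ} {a b : ℝ} (hab : a ≤ b)
    (hφ : ContinuousOn φ (Icc a b)) (hφφ' : ∀ x ∈ Ioo a b, HasDerivAt φ (φ' x) x)
    (hφ' : ∀ x ∈ Ioo a b, 0 ≤ φ' x) (hf : IntervalIntegrable f volume a b)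
    (hg : IntervalIntegrable g volume (φ a) (φ b)) (hfg : ∀ x ∈ Ioo a b, f x ≤ g (φ x) * φ' x) :
    ∫ x in a..b, f x ≤ ∫ u in φ a..φ b, g u := by
  have hIoo : Ioo (min a b) (max a b) = Ioo a b := by rw [min_eq_left hab, max_eq_right hab]
  rw [← uIcc_of_le hab] at hφ
  rw [← hIoo] at hφφ' hφ'
  rw [← integral_comp_mul_deriv_of_deriv_nonneg hφ hφφ' hφ']
  exact integral_mono_on_of_le_Ioo hab hf
    ((integrable_comp_mul_deriv_iff_of_deriv_nonneg hφ hφφ' hφ').2 hg) hfg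

theorem integral_le_integral_of_le_comp_mul_tan {f g : ℝ → ℝ} {l : ℝ} (hl : 0 < l)
    (hf : IntervalIntegrable f volume 0 (arctan l⁻¹)) (hg : IntervalIntegrable g volume 0 1)
    (hfg : ∀ x ∈ Ioo 0 (arctan l⁻¹), f x ≤ g (l * tan x) * (l / cos x ^ 2)) :
    ∫ x in 0..arctan l⁻¹, f x ≤ ∫ u in 0..1, g u := by
  have hcos : ∀ x ∈ Icc 0 (arctan l⁻¹), 0 < cos x := fun x hx =>
    cos_pos_of_mem_Ioo ⟨by linarith [hx.1, pi_pos], hx.2.trans_lt (arctan_lt_pi_div_two _)⟩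
  have h := integral_le_integral_of_le_comp_mul_deriv (g := g) (φ := fun x => l * tan x)
    (arctan_nonneg.2 (inv_nonneg.2 hl.le))
    (continuousOn_const.mul (continuousOn_tan.mono fun x hx => (hcos x hx).ne'))
    (fun x hx => by simpa [div_eq_mul_one_div l] using
      ((hasDerivAt_tan (hcos x (Ioo_subset_Icc_self hx)).ne').const_mul l))
    (fun x _ => by positivity) hf
  simpa [tan_arctan, hl.ne'] using h (by simpa [tan_arctan, hl.ne'] using hg) hfg

noncomputable def invSqrtTaylor (x : ℝ) : ℝ := 1 - x / 2 + 3 * x ^ 2 / 8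

theorem one_div_sqrt_one_add_le_invSqrtTaylor {x : ℝ} (hx : 0 ≤ x) :
    1 / √(1 + x) ≤ invSqrtTaylor x := by
  have hP : 0 < invSqrtTaylor x := by unfold invSqrtTaylor; nlinarith [sq_nonneg (x - 2 / 3)]
  rw [div_le_iff₀ (sqrt_pos.2 (by linarith)), ← sqrt_sq hP.le, ← sqrt_mul (sq_nonneg _)]
  refine one_le_sqrt.2 ?_
  unfold invSqrtTaylor
  nlinarith [pow_nonneg hx 3, mul_nonneg (pow_nonneg hx 3) (sq_nonneg (6 * x - 5))]

noncomputable def ellKMajorant (c v : ℝ) : ℝ := invSqrtTaylor (c * v ^ 2) / √(v ^ 2 + c)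

noncomputable def ellKMajorantPrimitive (c v : ℝ) : ℝ :=
  (1 + c ^ 2 / 4 + 9 * c ^ 4 / 64) * log (v + √(v ^ 2 + c))
    + √(v ^ 2 + c) * (-(c * v) / 4 + 3 * c ^ 2 * v ^ 3 / 32 - 9 * c ^ 3 * v / 64)

theorem continuous_ellKMajorant {c : ℝ} (hc : 0 < c) : Continuous (ellKMajorant c) :=
  (by unfold invSqrtTaylor; fun_prop : Continuous fun v => invSqrtTaylor (c * v ^ 2)).div
    (by fun_prop) fun v => (sqrt_pos.2 (by positivity)).ne'

theorem hasDerivAt_log_add_sqrt_sq_add {c : ℝ} (hc : 0 < c) (v : ℝ) :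
    HasDerivAt (fun v => log (v + √(v ^ 2 + c))) (1 / √(v ^ 2 + c)) v := by
  have hpos : 0 < v + √(v ^ 2 + c) := by
    have : |v| < √(v ^ 2 + c) := (lt_sqrt (abs_nonneg v)).2 (by rw [sq_abs]; linarith)
    linarith [neg_abs_le v]
  refine (((hasDerivAt_id' v).add
    (((hasDerivAt_pow 2 v).add_const c).sqrt (by positivity))).log hpos.ne').congr_deriv ?_
  simp only [Pi.add_apply]
  field_simp
  ring

theorem hasDerivAt_ellKMajorantPrimitive {c : ℝ} (hc : 0 < c) (v : ℝ) :
    HasDerivAt (ellKMajorantPrimitive c) (ellKMajorant c v) v := by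
  have hsq : HasDerivAt (fun v => √(v ^ 2 + c)) (v / √(v ^ 2 + c)) v := by
    refine (((hasDerivAt_pow 2 v).add_const c).sqrt (by positivity)).congr_deriv ?_
    field_simp
    norm_num
  have hpoly : HasDerivAt (fun v => -(c * v) / 4 + 3 * c ^ 2 * v ^ 3 / 32 - 9 * c ^ 3 * v / 64)
      (-c / 4 + 9 * c ^ 2 * v ^ 2 / 32 - 9 * c ^ 3 / 64) v := by
    refine (((((hasDerivAt_id' v).const_mul c).neg.div_const 4).add
      (((hasDerivAt_pow 3 v).const_mul (3 * c ^ 2)).div_const 32)).sub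
      (((hasDerivAt_id' v).const_mul (9 * c ^ 3)).div_const 64)).congr_deriv ?_
    norm_num
    ring
  refine (((hasDerivAt_log_add_sqrt_sq_add hc v).const_mul _).add (hsq.mul hpoly)).congr_deriv ?_
  have hs : 0 < √(v ^ 2 + c) := sqrt_pos.2 (by positivity)
  rw [ellKMajorant, invSqrtTaylor, eq_div_iff hs.ne']
  field_simp
  rw [sq_sqrt (by positivity)]
  ring

theorem integral_ellKMajorant {c : ℝ} (hc : 0 < c) :
    ∫ v in 0..1, ellKMajorant c v
      = (1 + c ^ 2 / 4 + 9 * c ^ 4 / 64) * (log (1 + √(1 + c)) - log c / 2)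
        + √(1 + c) * (-c / 4 + 3 * c ^ 2 / 32 - 9 * c ^ 3 / 64) := by
  rw [integral_eq_sub_of_hasDerivAt (fun v _ => hasDerivAt_ellKMajorantPrimitive hc v)
    ((continuous_ellKMajorant hc).intervalIntegrable _ _)]
  simp only [ellKMajorantPrimitive]
  norm_num [log_sqrt hc.le, add_comm c]
  ring

theorem one_div_sqrt_cos_sq_add_le {c x : ℝ} (hc : 0 < c) (hx : 0 < cos x) :
    1 / √(cos x ^ 2 + c ^ 2 * sin x ^ 2) ≤ ellKMajorant c (√c * tan x) * (√c / cos x ^ 2) := by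
  have hsin : sin x = tan x * cos x := by rw [tan_eq_sin_div_cos]; field_simp
  have hden : cos x ^ 2 + c ^ 2 * sin x ^ 2 = (1 + c ^ 2 * tan x ^ 2) * cos x ^ 2 := by
    rw [hsin]; ring
  have hsq : (√c * tan x) ^ 2 + c = c / cos x ^ 2 := by
    rw [mul_pow, sq_sqrt hc.le, ← inv_one_add_tan_sq hx.ne']; field_simp; ring
  calc 1 / √(cos x ^ 2 + c ^ 2 * sin x ^ 2) = 1 / √(1 + c ^ 2 * tan x ^ 2) / cos x := by
        rw [hden, sqrt_mul (by positivity), sqrt_sq hx.le]; field_simp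
    _ ≤ invSqrtTaylor (c ^ 2 * tan x ^ 2) / cos x := by
        gcongr; exact one_div_sqrt_one_add_le_invSqrtTaylor (by positivity)
    _ = ellKMajorant c (√c * tan x) * (√c / cos x ^ 2) := by
        rw [ellKMajorant, hsq, sqrt_div' _ (sq_nonneg _), sqrt_sq hx.le, mul_pow, sq_sqrt hc.le]
        field_simp

theorem one_div_sqrt_sin_sq_add_le {c x : ℝ} (hc : 0 < c) (hx : 0 < cos x) :
    1 / √(sin x ^ 2 + c ^ 2 * cos x ^ 2)
      ≤ ellKMajorant c ((√c)⁻¹ * tan x) * ((√c)⁻¹ / cos x ^ 2) := by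
  have hsin : sin x = tan x * cos x := by rw [tan_eq_sin_div_cos]; field_simp
  have hden : sin x ^ 2 + c ^ 2 * cos x ^ 2 = (tan x ^ 2 + c ^ 2) * cos x ^ 2 := by
    rw [hsin]; ring
  have hsq : ((√c)⁻¹ * tan x) ^ 2 + c = (tan x ^ 2 + c ^ 2) / c := by
    rw [mul_pow, inv_pow, sq_sqrt hc.le]; field_simp
  have hcos : cos x = 1 / √(1 + tan x ^ 2) := by
    rw [← sqrt_sq hx.le, ← inv_one_add_tan_sq hx.ne', sqrt_inv, one_div]
  calc 1 / √(sin x ^ 2 + c ^ 2 * cos x ^ 2) = cos x / (√(tan x ^ 2 + c ^ 2) * cos x ^ 2) := by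
        rw [hden, sqrt_mul (by positivity), sqrt_sq hx.le]; field_simp
    _ ≤ invSqrtTaylor (tan x ^ 2) / (√(tan x ^ 2 + c ^ 2) * cos x ^ 2) := by
        gcongr
        nth_rw 1 [hcos]
        exact one_div_sqrt_one_add_le_invSqrtTaylor (by positivity)
    _ = ellKMajorant c ((√c)⁻¹ * tan x) * ((√c)⁻¹ / cos x ^ 2) := by
        rw [ellKMajorant, hsq, sqrt_div' _ hc.le, mul_pow, inv_pow, sq_sqrt hc.le]
        field_simp

theorem integral_le_two_mul_integral_ellKMajorant {c : ℝ} (hc : 0 < c) :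
    ∫ x in 0..π / 2, 1 / √(cos x ^ 2 + c ^ 2 * sin x ^ 2) ≤ 2 * ∫ v in 0..1, ellKMajorant c v := by
  set F : ℝ → ℝ := fun x => 1 / √(cos x ^ 2 + c ^ 2 * sin x ^ 2)
  have hF : Continuous F := by
    refine continuous_const.div (by fun_prop) fun x => (sqrt_pos.2 ?_).ne'
    -- `(cos² x + c² sin² x) (1 + c²) ≥ c²`
    nlinarith [cos_sq_add_sin_sq x, sq_nonneg (cos x),
      mul_nonneg (pow_nonneg hc.le 4) (sq_nonneg (sin x))]
  have hg := (continuous_ellKMajorant hc).intervalIntegrable (μ := volume) 0 1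
  have hsc : 0 < √c := sqrt_pos.2 hc
  have hcos {l x : ℝ} (hx : x ∈ Ioo 0 (arctan l)) : 0 < cos x :=
    cos_pos_of_mem_Ioo ⟨by linarith [hx.1, pi_pos], hx.2.trans (arctan_lt_pi_div_two _)⟩
  have hleft := integral_le_integral_of_le_comp_mul_tan hsc (hF.intervalIntegrable _ _) hg
    fun x hx => one_div_sqrt_cos_sq_add_le hc (hcos hx)
  have hright := integral_le_integral_of_le_comp_mul_tan (inv_pos.2 hsc)
    ((hF.comp (continuous_sub_left (π / 2))).intervalIntegrable _ _) hg fun x hx => by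
      simpa [F, cos_pi_div_two_sub, sin_pi_div_two_sub] using
        one_div_sqrt_sin_sq_add_le hc (hcos hx)
  rw [inv_inv, Function.comp_def, integral_comp_sub_left F, ← arctan_inv_of_pos hsc,
    sub_zero] at hright
  rw [← integral_add_adjacent_intervals (hF.intervalIntegrable 0 (arctan (√c)⁻¹))
    (hF.intervalIntegrable _ _)]
  linarith

theorem sqrt_one_add_le_cubic {c : ℝ} (hc : 0 ≤ c) :
    √(1 + c) ≤ 1 + c / 2 - c ^ 2 / 8 + c ^ 3 / 16 := by
  have hu : 0 ≤ 1 + c / 2 - c ^ 2 / 8 + c ^ 3 / 16 := by nlinarith [sq_nonneg (c - 2)]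
  rw [sqrt_le_left hu]
  nlinarith [mul_nonneg (pow_nonneg hc 4) (sq_nonneg (c - 2))]

theorem log_le_log_add_sub_div {a y : ℝ} (ha : 0 < a) (hy : 0 < y) :
    log y ≤ log a + (y - a) / a := by
  have h := log_le_sub_one_of_pos (div_pos hy ha)
  rw [log_div hy.ne' ha.ne'] at h
  rw [sub_div, div_self ha.ne']
  linarith

theorem two_mul_integral_ellKMajorant_lt {c : ℝ} (hc0 : 0 < c) (hc1 : c ≤ 1) :
    2 * ∫ v in 0..1, ellKMajorant c v < (1 + c ^ 2 / 4) * log (4 / c) := by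
  rw [integral_ellKMajorant hc0]
  set s := √(1 + c)
  have hlog4 : log (4 / c) = 2 * log 2 - log c := by
    rw [log_div four_ne_zero hc0.ne', show (4 : ℝ) = 2 ^ 2 by norm_num, log_pow, Nat.cast_ofNat]
  have hlog1s := mul_le_mul_of_nonneg_left
    (log_le_log_add_sub_div two_pos (show 0 < 1 + s by positivity))
    (show 0 ≤ 1 + c ^ 2 / 4 + 9 * c ^ 4 / 64 by positivity)
  have hlogc : c ^ 3 * (c - 1) ≤ c ^ 4 * log c :=
    calc c ^ 3 * (c - 1) = c ^ 4 * (1 - c⁻¹) := by field_simp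
      _ ≤ c ^ 4 * log c :=
        mul_le_mul_of_nonneg_left (one_sub_inv_le_log_of_pos hc0) (by positivity)
  -- the coefficient of `s` once `log (1 + s)` is replaced by its tangent-line bound
  have hs := mul_le_mul_of_nonneg_left (sqrt_one_add_le_cubic hc0.le)
    (show 0 ≤ 1 - c / 2 + 7 * c ^ 2 / 16 - 9 * c ^ 3 / 32 + 9 * c ^ 4 / 64 by nlinarith)
  have hlog2 := mul_le_mul_of_nonneg_left
    (log_two_lt_d9.trans (by norm_num : (0.6931471808 : ℝ) < 7 / 10)).le
    (show 0 ≤ c ^ 4 by positivity)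
  have hpoly : -3 / 16 + 13 * c / 64 - 109 * c ^ 2 / 640 + 17 * c ^ 3 / 128 - 9 * c ^ 4 / 256
      + 9 * c ^ 5 / 1024 < 0 := by
    nlinarith [pow_le_one₀ hc0.le hc1 (n := 2), pow_le_one₀ hc0.le hc1 (n := 3), pow_pos hc0 4]
  rw [hlog4]
  linarith [mul_pos (pow_pos hc0 2) (neg_pos.2 hpoly)]

theorem ellK_lt_log_bound (k : ℝ) (hk0 : 0 < k) (hk1 : k < 1) :
    ellK k < (1 + (Real.sqrt (1 - k^2))^2 / 4) * Real.log (4 / Real.sqrt (1 - k^2)) := by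
  have hk : 0 < 1 - k ^ 2 := by nlinarith
  have hc0 : 0 < √(1 - k ^ 2) := sqrt_pos.2 hk
  have hc1 : √(1 - k ^ 2) ≤ 1 := sqrt_le_one.2 (by nlinarith)
  have hK : ellK k = ∫ x in 0..π / 2, 1 / √(cos x ^ 2 + √(1 - k ^ 2) ^ 2 * sin x ^ 2) := by
    refine integral_congr fun x _ => ?_
    rw [sq_sqrt hk.le]
    congr 3
    linear_combination -cos_sq_add_sin_sq x
  rw [hK]
  exact (integral_le_two_mul_integral_ellKMajorant hc0).trans_lt
    (two_mul_integral_ellKMajorant_lt hc0 hc1)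
end

section
/- For 0 < k < 1, with k' = √(1-k²), the complete elliptic integral of the first kind satisfies K(k) < (π/2)·( (3/4)·log(k')/(k'-1) + 1/(2·(1+k')) ). -/
/-!
Landen's transformation `K(k) = 2/(1+k') K(r)` with `r = (1-k')/(1+k')` comes from Gauss's
invariance of `∫₀^∞ dx/√((x²+a²)(x²+b²))` under `(a, b) ↦ ((a+b)/2, √(ab))`. Since
`log k' / (k' - 1) = (log(1+r) - log(1-r)) / (2r) · 2/(1+k')`, it then suffices to show
`K(r) < π/2 · (1/4 + 3/8 · (log(1+r) - log(1-r))/r)`. Expanding `K(r) = π/2 · ∑ cₙ² r²ⁿ` with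
`cₙ = (2n-1)!!/(2n)!!` and `log(1+r) - log(1-r) = 2 ∑ r²ⁿ⁺¹/(2n+1)`, this is a termwise comparison:
`(2n+1) cₙ²` decreases, so `cₙ² ≤ 3/(4(2n+1))` for `n ≥ 1`, strictly for `n = 2`.
-/

open Real

open Set MeasureTheory intervalIntegral

noncomputable def wallisCoeff (n : ℕ) : ℝ :=
  ∏ i ∈ Finset.range n, (2 * (i : ℝ) + 1) / (2 * i + 2)

lemma wallisCoeff_zero : wallisCoeff 0 = 1 := Finset.prod_range_zero _

lemma wallisCoeff_succ (n : ℕ) :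
    wallisCoeff (n + 1) = wallisCoeff n * ((2 * n + 1) / (2 * n + 2)) :=
  Finset.prod_range_succ _ n

lemma wallisCoeff_two : wallisCoeff 2 = 3 / 8 := by
  norm_num [wallisCoeff_succ, wallisCoeff_zero]

lemma wallisCoeff_nonneg (n : ℕ) : 0 ≤ wallisCoeff n :=
  Finset.prod_nonneg fun _ _ ↦ by positivity

lemma ring_choose_eq_wallisCoeff (n : ℕ) :
    Ring.choose ((1 / 2 : ℝ) + n - 1) n = wallisCoeff n := by
  have hpoch : (ascPochhammer ℝ n).eval (1 / 2) = n.factorial * wallisCoeff n := by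
    induction n with
    | zero => simp [wallisCoeff_zero]
    | succ n ih =>
      rw [ascPochhammer_succ_eval, ih, wallisCoeff_succ, Nat.factorial_succ]
      push_cast
      field_simp
      ring
  rw [Ring.choose_eq_smul, Polynomial.descPochhammer_smeval_eq_ascPochhammer,
    Polynomial.ascPochhammer_smeval_eq_eval, smul_eq_mul,
    show (1 / 2 : ℝ) + n - 1 - n + 1 = 1 / 2 by ring, hpoch,
    inv_mul_cancel_left₀ (by positivity)]

lemma hasSum_wallisCoeff_mul_pow {z : ℝ} (hz : |z| < 1) :
    HasSum (fun n ↦ wallisCoeff n * z ^ n) (1 / √(1 - z)) := by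
  have h := (one_div_one_sub_rpow_hasFPowerSeriesOnBall_zero (1 / 2)).hasSum (y := z)
    (by simpa [← ofReal_norm] using hz)
  simpa only [FormalMultilinearSeries.ofScalars_apply_eq, ring_choose_eq_wallisCoeff, smul_eq_mul,
    zero_add, ← sqrt_eq_rpow] using h

lemma integral_sin_pow_even_half_pi (n : ℕ) :
    ∫ θ in (0 : ℝ)..(π / 2), sin θ ^ (2 * n) = π / 2 * wallisCoeff n := by
  have hint : ∀ a b : ℝ, IntervalIntegrable (fun θ ↦ sin θ ^ (2 * n)) volume a b :=
    fun a b ↦ (continuous_sin.pow _).intervalIntegrable a b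
  have hsymm :
      ∫ θ in (π / 2)..π, sin θ ^ (2 * n) = ∫ θ in (0 : ℝ)..(π / 2), sin θ ^ (2 * n) := by
    simpa [sin_pi_sub, show π - π / 2 = π / 2 by ring] using
      (integral_comp_sub_left (fun θ ↦ sin θ ^ (2 * n)) π (a := 0) (b := π / 2)).symm
  have := integral_add_adjacent_intervals (hint 0 (π / 2)) (hint (π / 2) π)
  rw [hsymm, integral_sin_pow_even] at this
  rw [wallisCoeff]
  linarith

theorem hasSum_ellK {k : ℝ} (hk : |k| < 1) :
    HasSum (fun n ↦ π / 2 * wallisCoeff n ^ 2 * k ^ (2 * n)) (ellK k) := by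
  have hk2 : k ^ 2 < 1 := (sq_lt_one_iff_abs_lt_one k).2 hk
  have hcoeff : ∀ n, 0 ≤ wallisCoeff n * k ^ (2 * n) := fun n ↦
    mul_nonneg (wallisCoeff_nonneg n) ((even_two_mul n).pow_nonneg k)
  have hexpand : ∀ θ, HasSum (fun n ↦ wallisCoeff n * k ^ (2 * n) * sin θ ^ (2 * n))
      (1 / √(1 - k ^ 2 * sin θ ^ 2)) := fun θ ↦ by
    have hz : |k ^ 2 * sin θ ^ 2| < 1 := by
      rw [abs_of_nonneg (by positivity)]
      nlinarith [sin_sq_le_one θ, sq_nonneg k]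
    simpa only [mul_pow, pow_mul, mul_assoc] using hasSum_wallisCoeff_mul_pow hz
  have hsum := hasSum_integral_of_dominated_convergence (μ := volume) (a := 0) (b := π / 2)
    (fun n _ ↦ wallisCoeff n * k ^ (2 * n)) (fun n ↦ by fun_prop)
    (fun n ↦ .of_forall fun θ _ ↦ by
      rw [norm_mul, Real.norm_of_nonneg (hcoeff n), norm_pow, Real.norm_eq_abs]
      exact mul_le_of_le_one_right (hcoeff n) (pow_le_one₀ (abs_nonneg _) (abs_sin_le_one θ)))
    (.of_forall fun _ _ ↦ by simpa only [sin_pi_div_two, one_pow, mul_one] using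
      (hexpand (π / 2)).summable)
    intervalIntegrable_const (.of_forall fun θ _ ↦ hexpand θ)
  have hterm : ∀ n, ∫ θ in (0 : ℝ)..(π / 2), wallisCoeff n * k ^ (2 * n) * sin θ ^ (2 * n) =
      π / 2 * wallisCoeff n ^ 2 * k ^ (2 * n) := fun n ↦ by
    rw [intervalIntegral.integral_const_mul, integral_sin_pow_even_half_pi]
    ring
  rw [ellK]
  simpa only [hterm] using hsum

lemma two_mul_add_one_mul_wallisCoeff_sq_le {n : ℕ} (hn : 1 ≤ n) :
    (2 * n + 1) * wallisCoeff n ^ 2 ≤ 3 / 4 := by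
  induction n, hn using Nat.le_induction with
  | base => norm_num [wallisCoeff_succ, wallisCoeff_zero]
  | succ n _ ih =>
    have hratio : (2 * (n : ℝ) + 3) * (2 * n + 1) / (2 * n + 2) ^ 2 ≤ 1 := by
      rw [div_le_one (by positivity)]; nlinarith
    calc (2 * ((n + 1 : ℕ) : ℝ) + 1) * wallisCoeff (n + 1) ^ 2
        = (2 * (n : ℝ) + 3) * (2 * n + 1) / (2 * n + 2) ^ 2 *
            ((2 * n + 1) * wallisCoeff n ^ 2) := by
          rw [wallisCoeff_succ]; push_cast; field_simp; ring
      _ ≤ 3 / 4 := (mul_le_of_le_one_left (by positivity) hratio).trans ih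

theorem ellK_lt_log_div {r : ℝ} (hr0 : 0 < r) (hr1 : r < 1) :
    ellK r < π / 2 * (1 / 4 + 3 / 8 * (log (1 + r) - log (1 - r)) / r) := by
  have hr : |r| < 1 := by rwa [abs_of_pos hr0]
  set b : ℕ → ℝ := fun n ↦ (if n = 0 then 1 / 4 else 0) + 3 / 4 / (2 * n + 1)
  have hg : HasSum (fun n ↦ π / 2 * b n * r ^ (2 * n))
      (π / 2 * (1 / 4 + 3 / 8 * (log (1 + r) - log (1 - r)) / r)) := by
    have h := ((hasSum_log_sub_log_of_abs_lt_one hr).mul_left (3 * π / (16 * r))).add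
      (hasSum_ite_eq 0 (π / 8))
    have e : (fun n ↦ π / 2 * b n * r ^ (2 * n)) = fun n : ℕ ↦
        3 * π / (16 * r) * (2 * (1 / (2 * n + 1)) * r ^ (2 * n + 1)) +
          if n = 0 then π / 8 else 0 := funext fun n ↦ by
      simp only [b, pow_succ]
      split_ifs with h0
      · subst h0; field_simp; ring
      · field_simp; ring
    rw [e, show π / 2 * (1 / 4 + 3 / 8 * (log (1 + r) - log (1 - r)) / r) =
      3 * π / (16 * r) * (log (1 + r) - log (1 - r)) + π / 8 by field_simp; ring]
    exact h
  refine hasSum_lt (i := 2) (fun n ↦ ?_) ?_ (hasSum_ellK hr) hg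
  · gcongr π / 2 * ?_ * _
    rcases Nat.eq_zero_or_pos n with rfl | hn
    · norm_num [b, wallisCoeff_zero]
    · have := two_mul_add_one_mul_wallisCoeff_sq_le hn
      simp only [b, if_neg hn.ne', zero_add]
      rw [le_div_iff₀ (by positivity)]
      linarith
  · have : 0 < π / 2 * r ^ (2 * 2) := by positivity
    norm_num [b, wallisCoeff_two]
    nlinarith

noncomputable def agmIntegral (a b : ℝ) : ℝ :=
  ∫ x in Ioi 0, (√((x ^ 2 + a ^ 2) * (x ^ 2 + b ^ 2)))⁻¹

theorem agmIntegral_eq_integral_cos_sin {a b : ℝ} (hb : 0 < b) :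
    agmIntegral a b = ∫ θ in (0 : ℝ)..(π / 2), (√(a ^ 2 * cos θ ^ 2 + b ^ 2 * sin θ ^ 2))⁻¹ := by
  have hcos : ∀ θ ∈ Ioo 0 (π / 2), 0 < cos θ := fun θ hθ ↦
    cos_pos_of_mem_Ioo ⟨by linarith [hθ.1, pi_pos], hθ.2⟩
  have himg : (b * tan ·) '' Ioo 0 (π / 2) = Ioi 0 := by
    ext y
    refine ⟨?_, fun hy ↦ ⟨arctan (y / b), ⟨?_, arctan_lt_pi_div_two _⟩, ?_⟩⟩
    · rintro ⟨θ, hθ, rfl⟩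
      exact mul_pos hb (tan_pos_of_pos_of_lt_pi_div_two hθ.1 hθ.2)
    · exact arctan_zero ▸ arctan_strictMono (div_pos hy hb)
    · simp only [tan_arctan]; field_simp
  have hderiv : ∀ θ ∈ Ioo 0 (π / 2),
      HasDerivWithinAt (b * tan ·) (b * (1 / cos θ ^ 2)) (Ioo 0 (π / 2)) θ := fun θ hθ ↦
    ((hasDerivAt_tan (hcos θ hθ).ne').const_mul b).hasDerivWithinAt
  have hinj : InjOn (b * tan ·) (Ioo 0 (π / 2)) := fun x hx y hy hxy ↦
    strictMonoOn_tan.injOn ⟨by linarith [hx.1, pi_pos], hx.2⟩ ⟨by linarith [hy.1, pi_pos], hy.2⟩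
      (mul_left_cancel₀ hb.ne' hxy)
  rw [agmIntegral, ← himg, integral_image_eq_integral_abs_deriv_smul measurableSet_Ioo hderiv hinj,
    integral_of_le (by positivity), integral_Ioc_eq_integral_Ioo]
  refine setIntegral_congr_fun measurableSet_Ioo fun θ hθ ↦ ?_
  have hc := hcos θ hθ
  have hS : 0 ≤ a ^ 2 * cos θ ^ 2 + b ^ 2 * sin θ ^ 2 := by positivity
  have hprod : ((b * tan θ) ^ 2 + a ^ 2) * ((b * tan θ) ^ 2 + b ^ 2) =
      (a ^ 2 * cos θ ^ 2 + b ^ 2 * sin θ ^ 2) * (b * (1 / cos θ ^ 2)) ^ 2 := by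
    rw [tan_eq_sin_div_cos]
    field_simp
    rw [sin_sq]
    ring
  rw [hprod, sqrt_mul hS, sqrt_sq (by positivity), smul_eq_mul, abs_of_pos (by positivity)]
  field_simp

theorem agmIntegral_mul_mul (a b : ℝ) {c : ℝ} (hc : 0 < c) :
    agmIntegral (c * a) (c * b) = c⁻¹ * agmIntegral a b := by
  have h := integral_comp_mul_left_Ioi
    (fun x ↦ (√((x ^ 2 + (c * a) ^ 2) * (x ^ 2 + (c * b) ^ 2)))⁻¹) 0 hc
  have hscale : ∀ x : ℝ, (√(((c * x) ^ 2 + (c * a) ^ 2) * ((c * x) ^ 2 + (c * b) ^ 2)))⁻¹ =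
      (c ^ 2)⁻¹ * (√((x ^ 2 + a ^ 2) * (x ^ 2 + b ^ 2)))⁻¹ := fun x ↦ by
    rw [show ((c * x) ^ 2 + (c * a) ^ 2) * ((c * x) ^ 2 + (c * b) ^ 2) =
      (x ^ 2 + a ^ 2) * (x ^ 2 + b ^ 2) * (c ^ 2) ^ 2 by ring,
      sqrt_mul (by positivity), sqrt_sq (by positivity), mul_inv, mul_comm]
  simp only [hscale, MeasureTheory.integral_const_mul, mul_zero, smul_eq_mul] at h
  rw [agmIntegral, agmIntegral, ← mul_inv_cancel_left₀ hc.ne' (∫ x in Ioi 0, _), ← h]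
  field_simp

theorem agmIntegral_eq_agmIntegral_mean {a b : ℝ} (ha : 0 < a) (hb : 0 < b) :
    agmIntegral ((a + b) / 2) √(a * b) = agmIntegral a b := by
  set g : ℝ → ℝ := fun u ↦ (√((u ^ 2 + ((a + b) / 2) ^ 2) * (u ^ 2 + √(a * b) ^ 2)))⁻¹
  set f : ℝ → ℝ := fun x ↦ (x - a * b / x) / 2
  have hab : 0 < a * b := mul_pos ha hb
  have heven : ∫ u, g u = 2 * agmIntegral ((a + b) / 2) √(a * b) := by
    simpa only [g, sq_abs, agmIntegral] using integral_comp_abs (f := g)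
  have hderiv : ∀ x ∈ Ioi (0 : ℝ), HasDerivWithinAt f ((1 + a * b / x ^ 2) / 2) (Ioi 0) x := by
    intro x hx
    have h : HasDerivAt f ((1 - a * b * -(x ^ 2)⁻¹) / 2) x := by
      simpa only [f, div_eq_mul_inv] using
        ((hasDerivAt_id' x).fun_sub ((hasDerivAt_inv (ne_of_gt hx)).const_mul (a * b))).div_const 2
    exact (h.congr_deriv (by ring)).hasDerivWithinAt
  have hmono : StrictMonoOn f (Ioi 0) := fun x hx y hy hxy ↦ by
    have : a * b / y < a * b / x := div_lt_div_of_pos_left hab hx hxy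
    simp only [f]
    linarith
  have himg : f '' Ioi 0 = univ := by
    refine eq_univ_of_forall fun u ↦ ?_
    have hlt : |u| < √(u ^ 2 + a * b) := by
      rw [← sqrt_sq_eq_abs]; exact sqrt_lt_sqrt (sq_nonneg u) (by linarith)
    have hpos : 0 < u + √(u ^ 2 + a * b) := by linarith [neg_abs_le u]
    have hs : √(u ^ 2 + a * b) ^ 2 = u ^ 2 + a * b := sq_sqrt (by positivity)
    refine ⟨_, hpos, ?_⟩
    simp only [f]
    field_simp
    nlinarith [hs]
  have hsubst := integral_image_eq_integral_abs_deriv_smul measurableSet_Ioi hderiv hmono.injOn g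
  rw [himg, Measure.restrict_univ, heven] at hsubst
  have hpt : ∀ x ∈ Ioi (0 : ℝ), |(1 + a * b / x ^ 2) / 2| • g (f x) =
      2 * (√((x ^ 2 + a ^ 2) * (x ^ 2 + b ^ 2)))⁻¹ := by
    intro x hx
    have hx : 0 < x := hx
    have hprod : (f x ^ 2 + ((a + b) / 2) ^ 2) * (f x ^ 2 + √(a * b) ^ 2) =
        (x ^ 2 + a ^ 2) * (x ^ 2 + b ^ 2) * ((x ^ 2 + a * b) / (4 * x ^ 2)) ^ 2 := by
      simp only [f]
      rw [sq_sqrt hab.le]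
      field_simp
      ring
    simp only [g]
    rw [hprod, sqrt_mul (by positivity), sqrt_sq (by positivity), smul_eq_mul,
      abs_of_pos (by positivity)]
    field_simp
    ring
  rw [setIntegral_congr_fun measurableSet_Ioi hpt, MeasureTheory.integral_const_mul] at hsubst
  unfold agmIntegral at hsubst ⊢
  linarith

theorem ellK_eq_agmIntegral {k : ℝ} (hk : |k| < 1) : ellK k = agmIntegral 1 √(1 - k ^ 2) := by
  have hk2 : 0 < 1 - k ^ 2 := sub_pos.2 ((sq_lt_one_iff_abs_lt_one k).2 hk)
  rw [agmIntegral_eq_integral_cos_sin (sqrt_pos.2 hk2), ellK]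
  refine intervalIntegral.integral_congr fun θ _ ↦ ?_
  rw [one_div, one_pow, one_mul, sq_sqrt hk2.le, cos_sq']
  ring_nf

theorem ellK_landen {k : ℝ} (hk : |k| < 1) :
    ellK k = 2 / (1 + √(1 - k ^ 2)) * ellK ((1 - √(1 - k ^ 2)) / (1 + √(1 - k ^ 2))) := by
  set t := √(1 - k ^ 2)
  have ht0 : 0 < t := sqrt_pos.2 (sub_pos.2 ((sq_lt_one_iff_abs_lt_one k).2 hk))
  have ht1 : t ≤ 1 := sqrt_le_one.2 (by nlinarith)
  have hr : |(1 - t) / (1 + t)| < 1 := by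
    rw [abs_div, abs_of_nonneg (by linarith : 0 ≤ 1 - t), abs_of_pos (by linarith : 0 < 1 + t),
      div_lt_one (by linarith)]
    linarith
  have hmodulus : √(1 - ((1 - t) / (1 + t)) ^ 2) = 2 * √t / (1 + t) := by
    rw [show 1 - ((1 - t) / (1 + t)) ^ 2 = (2 * √t / (1 + t)) ^ 2 by
      field_simp; rw [sq_sqrt ht0.le]; ring, sqrt_sq (by positivity)]
  have hscale := agmIntegral_mul_mul 1 (2 * √t / (1 + t)) (c := (1 + t) / 2) (by positivity)
  rw [mul_one, show (1 + t) / 2 * (2 * √t / (1 + t)) = √t by field_simp, inv_div] at hscale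
  rw [ellK_eq_agmIntegral hk, ellK_eq_agmIntegral hr, hmodulus, ← hscale,
    ← agmIntegral_eq_agmIntegral_mean one_pos ht0, one_mul]

theorem ellK_lt_K3 (k : ℝ) (hk0 : 0 < k) (hk1 : k < 1) :
    ellK k < (π/2) * ((3/4) * Real.log (Real.sqrt (1 - k^2)) / (Real.sqrt (1 - k^2) - 1)
      + 1 / (2 * (1 + Real.sqrt (1 - k^2)))) := by
  have hk : |k| < 1 := by rwa [abs_of_pos hk0]
  set t := √(1 - k ^ 2)
  have ht0 : 0 < t := sqrt_pos.2 (by nlinarith)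
  have ht1 : t < 1 := by rw [sqrt_lt' one_pos]; nlinarith
  set r := (1 - t) / (1 + t) with hr
  have hr0 : 0 < r := div_pos (by linarith) (by linarith)
  have hr1 : r < 1 := by rw [hr, div_lt_one (by linarith)]; linarith
  have hlog : log (1 + r) - log (1 - r) = -log t := by
    rw [← log_div (by positivity) (by linarith), ← log_inv, hr]
    congr 1
    field_simp [ht0.ne']
    ring
  calc ellK k = 2 / (1 + t) * ellK r := ellK_landen hk
    _ < 2 / (1 + t) * (π / 2 * (1 / 4 + 3 / 8 * (log (1 + r) - log (1 - r)) / r)) := by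
      gcongr
      exact ellK_lt_log_div hr0 hr1
    _ = _ := by
      have : 1 - t ≠ 0 := by linarith
      have : t - 1 ≠ 0 := by linarith
      rw [hlog, hr]
      field_simp
      ring
end

section
/- For fixed 0 < k < 1 and 0 < u < K(k), the Jacobi elliptic function cn(u,k) is strictly increasing as a function of the modulus k; more precisely, ∂cn(u,k)/∂k = (sn(u)·dn(u)/(k·k'²))·( E(u) − k'²·u − k²·sn(u)·cn(u)/dn(u) ) > 0, where E(u) = ∫₀^u dn²(v) dv. -/
open Real intervalIntegral

/-- Complete elliptic integral of the second kind. -/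
noncomputable def ellE (k : ℝ) : ℝ :=
  ∫ θ in (0:ℝ)..(π/2), Real.sqrt (1 - k^2 * (Real.sin θ)^2)

open Set Filter Topology Asymptotics MeasureTheory

/-!
With `am u = ∫₀^u dn`, the system forces `sn = sin ∘ am`, `cn = cos ∘ am` and
`dn = √(1 - k² sin² am)`, hence `F(k, am u) = u` for Legendre's incomplete integral
`F(k, φ) = ∫₀^φ dθ / √(1 - k² sin² θ)`. Differentiating this identity implicitly in `k` gives
`∂ₖ cn = sn · dn · ∂ₖF(k, am u)`, where `∂ₖF(k, φ) = ∫₀^φ k sin² θ / (1 - k² sin² θ)^{3/2} dθ`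
is positive because `0 < am u < π / 2` when `0 < u < K`. Both `∂ₖF(k, am u)` and
`(E(u) - k'² u - k² sn cn / dn) / (k k'²)` vanish at `u = 0` and have `u`-derivative
`k sn² / dn²`, so they agree.
-/

section Implicit

variable {Φ Φₓ : ℝ → ℝ → ℝ} {k x₀ : ℝ}

theorem isLittleO_sub_sub_mul_of_continuousAt_uncurry
    (hd : ∀ᶠ p in 𝓝 (k, x₀), HasDerivAt (Φ p.1) (Φₓ p.1 p.2) p.2)
    (hc : ContinuousAt (Function.uncurry Φₓ) (k, x₀)) {y : ℝ → ℝ}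
    (hy : Tendsto y (𝓝 k) (𝓝 x₀)) :
    (fun m => Φ m (y m) - Φ m x₀ - Φₓ k x₀ * (y m - x₀)) =o[𝓝 k] fun m => y m - x₀ := by
  refine IsLittleO.of_bound fun ε hε => ?_
  have hnear := hd.and (hc.eventually (Metric.closedBall_mem_nhds _ hε))
  rw [nhds_prod_eq] at hnear
  obtain ⟨P, hP, Q, hQ, hPQ⟩ := eventually_prod_iff.1 hnear
  obtain ⟨δ, hδ, hball⟩ := Metric.mem_nhds_iff.1 hQ
  filter_upwards [hP, hy (Metric.ball_mem_nhds x₀ hδ)] with m hm hym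
  have hmvt := (convex_ball x₀ δ).norm_image_sub_le_of_norm_hasDerivWithin_le
    (f := fun x => Φ m x - Φₓ k x₀ * x) (f' := fun x => Φₓ m x - Φₓ k x₀)
    (fun x hx => ((hPQ hm (hball hx)).1.sub ((hasDerivAt_id x).const_mul _)).hasDerivWithinAt
      |>.congr_deriv (by simp))
    (fun x hx => by simpa [dist_eq_norm] using (hPQ hm (hball hx)).2)
    (Metric.mem_ball_self hδ) hym
  refine le_trans (le_of_eq ?_) hmvt
  congr 1
  ring

theorem HasDerivAt.of_implicit {φ : ℝ → ℝ} {a : ℝ}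
    (hφ : ContinuousAt φ k) (heq : ∀ᶠ m in 𝓝 k, Φ m (φ m) = Φ k (φ k))
    (hΦm : HasDerivAt (fun m => Φ m (φ k)) a k)
    (hd : ∀ᶠ p in 𝓝 (k, φ k), HasDerivAt (Φ p.1) (Φₓ p.1 p.2) p.2)
    (hc : ContinuousAt (Function.uncurry Φₓ) (k, φ k)) (hne : Φₓ k (φ k) ≠ 0) :
    HasDerivAt φ (-a / Φₓ k (φ k)) k := by
  set b := Φₓ k (φ k)
  have h₁ := hΦm.isLittleO
  have h₂ := isLittleO_sub_sub_mul_of_continuousAt_uncurry hd hc hφ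
  have hsum : (fun m => (Φ m (φ m) - Φ m (φ k) - b * (φ m - φ k)) + b * (φ m - φ k)) =ᶠ[𝓝 k]
      fun m => -(Φ m (φ k) - Φ k (φ k) - (m - k) • a) - a * (m - k) := by
    filter_upwards [heq] with m hme
    rw [hme, smul_eq_mul]; ring
  -- `hsum` says `b Δ + a (m - k) = o(Δ) + o(m - k)` for `Δ = φ m - φ k`; this first forces
  -- `Δ = O(m - k)`, and then the `o(Δ)` term is `o(m - k)` as well.
  have hΔ : (fun m => φ m - φ k) =O[𝓝 k] fun m => m - k := by
    have h₂' := h₂.trans_isBigO (isBigO_self_const_mul hne _ _)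
    refine (isBigO_self_const_mul hne _ _).trans ?_
    refine h₂'.right_isTheta_add.isBigO.trans ?_
    refine IsBigO.congr' ?_ hsum.symm EventuallyEq.rfl
    exact h₁.isBigO.neg_left.sub ((isBigO_refl _ _).const_mul_left a)
  rw [hasDerivAt_iff_isLittleO]
  refine (((h₁.add (h₂.trans_isBigO hΔ)).neg_left).const_mul_left b⁻¹).congr' ?_ EventuallyEq.rfl
  filter_upwards [heq] with m hme
  simp only [hme, smul_eq_mul]
  field_simp
  ring

theorem continuousAt_of_apply_eq_of_strictMono {φ : ℝ → ℝ}
    (hmono : ∀ᶠ m in 𝓝 k, StrictMono (Φ m)) (heq : ∀ᶠ m in 𝓝 k, Φ m (φ m) = Φ k (φ k))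
    (hcont : ∀ x, ContinuousAt (fun m => Φ m x) k) : ContinuousAt φ k := by
  refine tendsto_order.2 ⟨fun y hy => ?_, fun z hz => ?_⟩
  · filter_upwards [hmono, heq, (hcont y).eventually (gt_mem_nhds (hmono.self_of_nhds hy))]
      with m hm hme hy'
    exact hm.lt_iff_lt.1 (hme ▸ hy')
  · filter_upwards [hmono, heq, (hcont z).eventually (lt_mem_nhds (hmono.self_of_nhds hz))]
      with m hm hme hz'
    exact hm.lt_iff_lt.1 (hme ▸ hz')

end Implicit

noncomputable def ellF (k φ : ℝ) : ℝ := ∫ θ in (0:ℝ)..φ, 1 / √(1 - k ^ 2 * sin θ ^ 2)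

noncomputable def ellFDerivModulus (k φ : ℝ) : ℝ :=
  ∫ θ in (0:ℝ)..φ, k * sin θ ^ 2 / √(1 - k ^ 2 * sin θ ^ 2) ^ 3

section EllipticIntegral

variable {k : ℝ}

theorem ellK_eq_ellF (k : ℝ) : ellK k = ellF k (π / 2) := rfl

@[simp] theorem ellF_zero_right (k : ℝ) : ellF k 0 = 0 := integral_same

theorem one_sub_sq_mul_sin_sq_pos (hk : k ^ 2 < 1) (θ : ℝ) : 0 < 1 - k ^ 2 * sin θ ^ 2 := by
  nlinarith [sin_sq_le_one θ, sq_nonneg (sin θ), sq_nonneg k]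

theorem continuous_ellF_integrand (hk : k ^ 2 < 1) :
    Continuous fun θ => 1 / √(1 - k ^ 2 * sin θ ^ 2) :=
  continuous_const.div (by fun_prop) fun θ => (sqrt_pos.2 (one_sub_sq_mul_sin_sq_pos hk θ)).ne'

theorem hasDerivAt_ellF (hk : k ^ 2 < 1) (φ : ℝ) :
    HasDerivAt (ellF k) (1 / √(1 - k ^ 2 * sin φ ^ 2)) φ :=
  ((continuous_ellF_integrand hk).integral_hasStrictDerivAt 0 φ).hasDerivAt

theorem strictMono_ellF (hk : k ^ 2 < 1) : StrictMono (ellF k) :=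
  strictMono_of_hasDerivAt_pos (hasDerivAt_ellF hk) fun φ =>
    one_div_pos.2 (sqrt_pos.2 (one_sub_sq_mul_sin_sq_pos hk φ))

theorem eventually_hasDerivAt_ellF (hk : k ^ 2 < 1) (φ : ℝ) :
    ∀ᶠ p : ℝ × ℝ in 𝓝 (k, φ), HasDerivAt (ellF p.1) (1 / √(1 - p.1 ^ 2 * sin p.2 ^ 2)) p.2 :=
  ((continuousAt_fst.pow 2).eventually (gt_mem_nhds hk)).mono fun p hp => hasDerivAt_ellF hp p.2

theorem continuousAt_ellF_integrand_uncurry (hk : k ^ 2 < 1) (φ : ℝ) :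
    ContinuousAt (Function.uncurry fun (k φ : ℝ) => 1 / √(1 - k ^ 2 * sin φ ^ 2)) (k, φ) :=
  continuousAt_const.div (by fun_prop) (sqrt_pos.2 (one_sub_sq_mul_sin_sq_pos hk φ)).ne'

theorem hasDerivAt_ellF_integrand_modulus (hk : k ^ 2 < 1) (θ : ℝ) :
    HasDerivAt (fun k => 1 / √(1 - k ^ 2 * sin θ ^ 2))
      (k * sin θ ^ 2 / √(1 - k ^ 2 * sin θ ^ 2) ^ 3) k := by
  have hpos := one_sub_sq_mul_sin_sq_pos hk θ
  have hsqrt := (((hasDerivAt_pow 2 k).mul_const (sin θ ^ 2)).const_sub 1).sqrt hpos.ne'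
  refine ((hasDerivAt_const k (1 : ℝ)).div hsqrt (sqrt_pos.2 hpos).ne').congr_deriv ?_
  rw [show √(1 - k ^ 2 * sin θ ^ 2) ^ 3 = √(1 - k ^ 2 * sin θ ^ 2) ^ 2 * √(1 - k ^ 2 * sin θ ^ 2)
    by ring, sq_sqrt hpos.le]
  field_simp
  ring

theorem continuous_ellFDerivModulus_integrand (hk : k ^ 2 < 1) :
    Continuous fun θ => k * sin θ ^ 2 / √(1 - k ^ 2 * sin θ ^ 2) ^ 3 :=
  (by fun_prop : Continuous _).div (by fun_prop)
    fun θ => pow_ne_zero _ (sqrt_pos.2 (one_sub_sq_mul_sin_sq_pos hk θ)).ne'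

theorem hasDerivAt_ellF_modulus (hk : k ^ 2 < 1) (φ : ℝ) :
    HasDerivAt (fun k => ellF k φ) (ellFDerivModulus k φ) k := by
  have hopen : IsOpen {m : ℝ | m ^ 2 < 1} := isOpen_lt (continuous_pow 2) continuous_const
  obtain ⟨ε, hε, hball⟩ := Metric.nhds_basis_closedBall.mem_iff.1 (hopen.mem_nhds hk)
  obtain ⟨C, hC⟩ := ((isCompact_closedBall k ε).prod isCompact_uIcc).exists_bound_of_continuousOn
    (f := Function.uncurry fun (m θ : ℝ) => m * sin θ ^ 2 / √(1 - m ^ 2 * sin θ ^ 2) ^ 3)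
    (fun p hp => ContinuousAt.continuousWithinAt (by
      refine ContinuousAt.div (by fun_prop) (by fun_prop) (pow_ne_zero _ ?_)
      exact (sqrt_pos.2 (one_sub_sq_mul_sin_sq_pos (hball hp.1) _)).ne'))
  refine (hasDerivAt_integral_of_dominated_loc_of_deriv_le (bound := fun _ => C)
    (F := fun m θ => 1 / √(1 - m ^ 2 * sin θ ^ 2))
    (F' := fun m θ => m * sin θ ^ 2 / √(1 - m ^ 2 * sin θ ^ 2) ^ 3)
    (Metric.ball_mem_nhds k hε) ?_ ((continuous_ellF_integrand hk).intervalIntegrable _ _)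
    ?_ ?_ intervalIntegrable_const ?_).2
  · filter_upwards [hopen.mem_nhds hk] with m hm
    exact (continuous_ellF_integrand hm).aestronglyMeasurable
  · exact (continuous_ellFDerivModulus_integrand hk).aestronglyMeasurable
  · exact ae_of_all _ fun θ hθ m hm =>
      hC (m, θ) ⟨Metric.ball_subset_closedBall hm, uIoc_subset_uIcc hθ⟩
  · exact ae_of_all _ fun θ _ m hm =>
      hasDerivAt_ellF_integrand_modulus (hball (Metric.ball_subset_closedBall hm)) θ

theorem ellFDerivModulus_pos (hk₀ : 0 < k) (hk : k ^ 2 < 1) {φ : ℝ} (hφ₀ : 0 < φ) (hφ : φ ≤ π) :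
    0 < ellFDerivModulus k φ := by
  refine intervalIntegral_pos_of_pos_on ?_ (fun θ hθ => ?_) hφ₀
  · exact (continuous_ellFDerivModulus_integrand hk).intervalIntegrable _ _
  · have := sin_pos_of_pos_of_lt_pi hθ.1 (hθ.2.trans_le hφ)
    have := sqrt_pos.2 (one_sub_sq_mul_sin_sq_pos hk θ)
    positivity

end EllipticIntegral

theorem eq_of_hasDerivAt_eq {f g f' : ℝ → ℝ} (hf : ∀ x, HasDerivAt f (f' x) x)
    (hg : ∀ x, HasDerivAt g (f' x) x) (h₀ : f 0 = g 0) (x : ℝ) : f x = g x :=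
  congrFun (eq_of_fderiv_eq (𝕜 := ℝ) (fun x => (hf x).differentiableAt)
    (fun x => (hg x).differentiableAt)
    (fun x => by rw [(hf x).hasFDerivAt.fderiv, (hg x).hasFDerivAt.fderiv]) 0 h₀) x

structure IsJacobiSolution (m : ℝ) (s c d : ℝ → ℝ) : Prop where
  s_zero : s 0 = 0
  c_zero : c 0 = 1
  d_zero : d 0 = 1
  hasDerivAt_s : ∀ u, HasDerivAt s (c u * d u) u
  hasDerivAt_c : ∀ u, HasDerivAt c (-(s u * d u)) u
  hasDerivAt_d : ∀ u, HasDerivAt d (-(m ^ 2 * s u * c u)) u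

noncomputable def jacobiAmplitude (d : ℝ → ℝ) (u : ℝ) : ℝ := ∫ v in (0:ℝ)..u, d v

namespace IsJacobiSolution

variable {m : ℝ} {s c d : ℝ → ℝ}

theorem sq_add_sq (h : IsJacobiSolution m s c d) (u : ℝ) : s u ^ 2 + c u ^ 2 = 1 :=
  (eq_of_hasDerivAt_eq (f := fun u => s u ^ 2 + c u ^ 2) (f' := 0)
    (fun u => (((h.hasDerivAt_s u).pow 2).add ((h.hasDerivAt_c u).pow 2)).congr_deriv
      (by simp; ring))
    (fun u => hasDerivAt_const u 1) (by simp [h.s_zero, h.c_zero])) u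

theorem sq_mul_sq_add_sq (h : IsJacobiSolution m s c d) (u : ℝ) :
    m ^ 2 * s u ^ 2 + d u ^ 2 = 1 :=
  (eq_of_hasDerivAt_eq (f := fun u => m ^ 2 * s u ^ 2 + d u ^ 2) (f' := 0)
    (fun u => ((((h.hasDerivAt_s u).pow 2).const_mul (m ^ 2)).add
      ((h.hasDerivAt_d u).pow 2)).congr_deriv (by simp; ring))
    (fun u => hasDerivAt_const u 1) (by simp [h.s_zero, h.d_zero])) u

theorem continuous_d (h : IsJacobiSolution m s c d) : Continuous d :=
  continuous_iff_continuousAt.2 fun u => (h.hasDerivAt_d u).continuousAt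

theorem d_pos (h : IsJacobiSolution m s c d) (hm : m ^ 2 < 1) (u : ℝ) : 0 < d u := by
  have hd_ne : ∀ v, d v ≠ 0 := fun v hv => by
    nlinarith [h.sq_add_sq v, h.sq_mul_sq_add_sq v, sq_nonneg (c v), sq_nonneg m]
  by_contra! hu
  obtain ⟨v, hv⟩ := intermediate_value_univ u 0 h.continuous_d ⟨hu, by simp [h.d_zero]⟩
  exact hd_ne v hv

theorem hasDerivAt_jacobiAmplitude (h : IsJacobiSolution m s c d) (u : ℝ) :
    HasDerivAt (jacobiAmplitude d) (d u) u :=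
  (h.continuous_d.integral_hasStrictDerivAt 0 u).hasDerivAt

theorem sin_cos_jacobiAmplitude (h : IsJacobiSolution m s c d) (u : ℝ) :
    sin (jacobiAmplitude d u) = s u ∧ cos (jacobiAmplitude d u) = c u := by
  set θ := jacobiAmplitude d
  -- `(s, c)` and `(sin θ, cos θ)` are unit vectors whose inner product stays equal to `1`.
  have hI : s u * sin (θ u) + c u * cos (θ u) = 1 :=
    (eq_of_hasDerivAt_eq (f := fun u => s u * sin (θ u) + c u * cos (θ u)) (f' := 0)
      (fun u => (((h.hasDerivAt_s u).mul (h.hasDerivAt_jacobiAmplitude u).sin).add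
        ((h.hasDerivAt_c u).mul (h.hasDerivAt_jacobiAmplitude u).cos)).congr_deriv
          (by simp only [Pi.zero_apply]; ring))
      (fun u => hasDerivAt_const u 1) (by simp [θ, h.s_zero, h.c_zero, jacobiAmplitude])) u
  have hsc := h.sq_add_sq u
  have hθ := sin_sq_add_cos_sq (θ u)
  constructor <;> nlinarith [sq_nonneg (s u - sin (θ u)), sq_nonneg (c u - cos (θ u))]

theorem sqrt_one_sub_sq_mul_sin_sq_jacobiAmplitude (h : IsJacobiSolution m s c d) (hm : m ^ 2 < 1)
    (u : ℝ) : √(1 - m ^ 2 * sin (jacobiAmplitude d u) ^ 2) = d u := by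
  rw [(h.sin_cos_jacobiAmplitude u).1, ← sqrt_sq (h.d_pos hm u).le]
  congr 1
  linarith [h.sq_mul_sq_add_sq u]

theorem ellF_jacobiAmplitude (h : IsJacobiSolution m s c d) (hm : m ^ 2 < 1) (u : ℝ) :
    ellF m (jacobiAmplitude d u) = u :=
  (eq_of_hasDerivAt_eq (f := fun u => ellF m (jacobiAmplitude d u)) (f' := fun _ => 1)
    (fun u => ((hasDerivAt_ellF hm _).comp u (h.hasDerivAt_jacobiAmplitude u)).congr_deriv (by
      rw [h.sqrt_one_sub_sq_mul_sin_sq_jacobiAmplitude hm, one_div_mul_cancel (h.d_pos hm u).ne']))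
    hasDerivAt_id (by simp [jacobiAmplitude])) u

theorem ellFDerivModulus_jacobiAmplitude (h : IsJacobiSolution m s c d) (hm₀ : m ≠ 0)
    (hm : m ^ 2 < 1) (u : ℝ) :
    ellFDerivModulus m (jacobiAmplitude d u) =
      ((∫ v in (0:ℝ)..u, d v ^ 2) - (1 - m ^ 2) * u - m ^ 2 * s u * c u / d u) /
        (m * (1 - m ^ 2)) := by
  refine eq_of_hasDerivAt_eq (f := fun u => ellFDerivModulus m (jacobiAmplitude d u))
    (g := fun u => ((∫ v in (0:ℝ)..u, d v ^ 2) - (1 - m ^ 2) * u - m ^ 2 * s u * c u / d u) /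
      (m * (1 - m ^ 2)))
    (f' := fun u => m * s u ^ 2 / d u ^ 2) (fun u => ?_)
    (fun u => ?_) ?_ u
  · have hP := (continuous_ellFDerivModulus_integrand hm).integral_hasStrictDerivAt 0
      (jacobiAmplitude d u)
    refine (hP.hasDerivAt.comp u (h.hasDerivAt_jacobiAmplitude u)).congr_deriv ?_
    have hd := (h.d_pos hm u).ne'
    rw [h.sqrt_one_sub_sq_mul_sin_sq_jacobiAmplitude hm, (h.sin_cos_jacobiAmplitude u).1]
    field_simp
  · have hd := h.d_pos hm u
    have hE := (h.continuous_d.pow 2).integral_hasStrictDerivAt 0 u |>.hasDerivAt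
    have hq := (((h.hasDerivAt_s u).const_mul (m ^ 2)).mul (h.hasDerivAt_c u)).div
      (h.hasDerivAt_d u) hd.ne'
    refine (((hE.sub ((hasDerivAt_id u).const_mul (1 - m ^ 2))).sub hq).div_const _).congr_deriv ?_
    have hc2 := h.sq_add_sq u
    have hd2 := h.sq_mul_sq_add_sq u
    have : 1 - m ^ 2 ≠ 0 := by linarith
    field_simp
    simp only [Pi.pow_apply, Pi.mul_apply]
    linear_combination
      (-m ^ 2 * d u ^ 2 - m ^ 4 * s u ^ 2) * hc2 + (d u ^ 2 + m ^ 2 * s u ^ 2) * hd2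
  · simp [jacobiAmplitude, ellFDerivModulus, h.s_zero]

theorem jacobiAmplitude_mem_Ioo (h : IsJacobiSolution m s c d) (hm : m ^ 2 < 1) {u : ℝ}
    (hu₀ : 0 < u) (hu : u < ellK m) : jacobiAmplitude d u ∈ Ioo 0 (π / 2) := by
  have hF := h.ellF_jacobiAmplitude hm u
  constructor
  · rwa [← (strictMono_ellF hm).lt_iff_lt, ellF_zero_right, hF]
  · rwa [← (strictMono_ellF hm).lt_iff_lt, hF, ← ellK_eq_ellF]

end IsJacobiSolution

theorem hasDerivAt_jacobiAmplitude_modulus {s c d : ℝ → ℝ → ℝ} {k : ℝ}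
    (hJ : ∀ᶠ m in 𝓝 k, IsJacobiSolution m (s · m) (c · m) (d · m)) (hk : k ^ 2 < 1) (u : ℝ) :
    HasDerivAt (fun m => jacobiAmplitude (d · m) u)
      (-(d u k * ellFDerivModulus k (jacobiAmplitude (d · k) u))) k := by
  set φ : ℝ → ℝ := fun m => jacobiAmplitude (d · m) u
  have hJk := hJ.self_of_nhds
  have hsq : ∀ᶠ m in 𝓝 k, m ^ 2 < 1 := (continuous_pow 2).continuousAt.eventually (gt_mem_nhds hk)
  have hφ_eq : ∀ᶠ m in 𝓝 k, ellF m (φ m) = ellF k (φ k) := by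
    filter_upwards [hJ, hsq] with m hm hm'
    rw [hm.ellF_jacobiAmplitude hm', hJk.ellF_jacobiAmplitude hk]
  have hφ_cont : ContinuousAt φ k :=
    continuousAt_of_apply_eq_of_strictMono (hsq.mono fun m hm => strictMono_ellF hm) hφ_eq
      fun x => (hasDerivAt_ellF_modulus hk x).continuousAt
  convert HasDerivAt.of_implicit hφ_cont hφ_eq (hasDerivAt_ellF_modulus hk _)
    (eventually_hasDerivAt_ellF hk _) (continuousAt_ellF_integrand_uncurry hk _)
    (one_div_pos.2 (sqrt_pos.2 (one_sub_sq_mul_sin_sq_pos hk _))).ne' using 1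
  rw [hJk.sqrt_one_sub_sq_mul_sin_sq_jacobiAmplitude hk]
  field_simp
  rfl

theorem cn_strictMono_in_modulus (sn cn dn : ℝ → ℝ → ℝ)
    (hjac : ∀ m ∈ Set.Ioo (0:ℝ) 1,
      sn 0 m = 0 ∧ cn 0 m = 1 ∧ dn 0 m = 1 ∧
      ∀ u : ℝ, HasDerivAt (fun v => sn v m) (cn u m * dn u m) u ∧
        HasDerivAt (fun v => cn v m) (-(sn u m * dn u m)) u ∧
        HasDerivAt (fun v => dn v m) (-(m^2 * sn u m * cn u m)) u)
    (k : ℝ) (hk0 : 0 < k) (hk1 : k < 1)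
    (u : ℝ) (hu0 : 0 < u) (hu : u < ellK k) :
    HasDerivAt (fun m => cn u m)
      (sn u k * dn u k / (k * (1 - k^2)) *
        ((∫ v in (0:ℝ)..u, (dn v k)^2) - (1 - k^2) * u
          - k^2 * sn u k * cn u k / dn u k)) k ∧
    0 < sn u k * dn u k / (k * (1 - k^2)) *
        ((∫ v in (0:ℝ)..u, (dn v k)^2) - (1 - k^2) * u
          - k^2 * sn u k * cn u k / dn u k) := by
  have hk2 : k ^ 2 < 1 := by nlinarith
  have hJ : ∀ᶠ m in 𝓝 k, IsJacobiSolution m (sn · m) (cn · m) (dn · m) :=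
    eventually_of_mem (Ioo_mem_nhds hk0 hk1) fun m hm =>
      let ⟨h₀, h₁, h₂, h⟩ := hjac m hm
      ⟨h₀, h₁, h₂, fun u => (h u).1, fun u => (h u).2.1, fun u => (h u).2.2⟩
  have hJk := hJ.self_of_nhds
  set φ := jacobiAmplitude (dn · k) u
  obtain ⟨hsn, -⟩ : sin φ = sn u k ∧ _ := hJk.sin_cos_jacobiAmplitude u
  obtain ⟨hφ₀, hφ⟩ := hJk.jacobiAmplitude_mem_Ioo hk2 hu0 hu
  have hφπ : φ < π := hφ.trans (half_lt_self pi_pos)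
  have hvalue : sn u k * dn u k / (k * (1 - k^2)) *
      ((∫ v in (0:ℝ)..u, (dn v k)^2) - (1 - k^2) * u - k^2 * sn u k * cn u k / dn u k) =
      sn u k * dn u k * ellFDerivModulus k φ := by
    rw [hJk.ellFDerivModulus_jacobiAmplitude hk0.ne' hk2]
    field_simp
  rw [hvalue]
  constructor
  · have hcn : (fun m => cn u m) =ᶠ[𝓝 k] fun m => cos (jacobiAmplitude (dn · m) u) := by
      filter_upwards [hJ] with m hm
      exact (hm.sin_cos_jacobiAmplitude u).2.symm
    refine ((hasDerivAt_jacobiAmplitude_modulus hJ hk2 u).cos.congr_of_eventuallyEq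
      hcn).congr_deriv ?_
    rw [hsn]
    ring
  · exact mul_pos (mul_pos (hsn ▸ sin_pos_of_pos_of_lt_pi hφ₀ hφπ) (hJk.d_pos hk2 u))
      (ellFDerivModulus_pos hk0 hk2 hφ₀ hφπ.le)
end

section
/- Let −1 < α < β < 1 with α + β ≥ 0. Then √k'/(1+k') ≥ (1/2)·√(1−β²), where k'² = (1+α)(1−β)/((1−α)(1+β)); i.e., the lower bound √k'/(1+k') for cap([−1,α]∪[β,1]) is at least the trivial lower bound cap([−1,−β]∪[β,1]) = (1/2)√(1−β²). -/
/-!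
The map `t ↦ √t / (1 + t)` is increasing on `[0, 1]`, and the modulus
`k' = √((1+α)(1-β)/((1-α)(1+β)))` lies in `[0, 1]` and is increasing in `α`. At `α = -β` it equals
`(1-β)/(1+β)`, where `√k'/(1+k') = ½√(1-β²)`; hence `α + β ≥ 0` gives the inequality.
-/

open Real

theorem sqrt_div_one_add_monotoneOn :
    MonotoneOn (fun t : ℝ => √t / (1 + t)) (Set.Icc 0 1) := by
  intro s ⟨hs0, hs1⟩ t ⟨ht0, ht1⟩ hst
  have hu : √s ≤ √t := sqrt_le_sqrt hst
  have huv : √s * √t ≤ 1 := mul_le_one₀ (sqrt_le_one.mpr hs1) (sqrt_nonneg _)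
    (sqrt_le_one.mpr ht1)
  have cross : √t * (1 + s) - √s * (1 + t) = (√t - √s) * (1 - √s * √t) := by
    linear_combination √t * (Real.sq_sqrt hs0).symm - √s * (Real.sq_sqrt ht0).symm
  dsimp only
  rw [div_le_div_iff₀ (by positivity) (by positivity)]
  linarith [mul_nonneg (sub_nonneg.mpr hu) (sub_nonneg.mpr huv)]

theorem sqrt_div_one_add_one_sub_div_one_add {β : ℝ} (hβ : -1 < β) (hβ' : β ≤ 1) :
    √((1 - β) / (1 + β)) / (1 + (1 - β) / (1 + β)) = 1 / 2 * √(1 - β ^ 2) := by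
  have h1 : 0 < 1 + β := by linarith
  rw [sqrt_div (by linarith), show 1 - β ^ 2 = (1 - β) * (1 + β) by ring,
    sqrt_mul (by linarith)]
  field_simp
  rw [Real.sq_sqrt h1.le]
  ring

theorem one_sub_div_one_add_le_sqrt {α β : ℝ} (hα : α < 1) (hβ : -1 < β) (hβ' : β ≤ 1)
    (hab : 0 ≤ α + β) :
    (1 - β) / (1 + β) ≤ √((1 + α) * (1 - β) / ((1 - α) * (1 + β))) := by
  have h1 : 0 < 1 + β := by linarith
  have h2 : 0 < 1 - α := by linarith
  rw [← sqrt_sq (div_nonneg (by linarith) h1.le)]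
  refine sqrt_le_sqrt ?_
  rw [div_pow, div_le_div_iff₀ (by positivity) (by positivity)]
  nlinarith [mul_nonneg (mul_nonneg (sub_nonneg.mpr hβ') h1.le) hab]

theorem sqrt_modulus_le_one {α β : ℝ} (hαβ : α ≤ β) (hden : 0 ≤ (1 - α) * (1 + β)) :
    √((1 + α) * (1 - β) / ((1 - α) * (1 + β))) ≤ 1 :=
  sqrt_le_one.mpr (div_le_one_of_le₀ (by linarith) hden)

theorem lower_bound_comparison_general (α β : ℝ) (hαβ : α < β) (hβ : β < 1)
    (hab : 0 ≤ α + β) :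
    Real.sqrt (Real.sqrt ((1+α)*(1-β)/((1-α)*(1+β)))) /
        (1 + Real.sqrt ((1+α)*(1-β)/((1-α)*(1+β)))) ≥
      (1/2) * Real.sqrt (1 - β^2) := by
  have hβ_pos : 0 < β := by linarith
  rw [ge_iff_le, ← sqrt_div_one_add_one_sub_div_one_add (by linarith) hβ.le]
  refine sqrt_div_one_add_monotoneOn
    ⟨div_nonneg (by linarith) (by linarith), ?_⟩
    ⟨sqrt_nonneg _, sqrt_modulus_le_one hαβ.le (by nlinarith)⟩
    (one_sub_div_one_add_le_sqrt (by linarith) (by linarith) hβ.le hab)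
  rw [div_le_one (by linarith)]
  linarith

theorem lower_bound_comparison (α β : ℝ) (hα : -1 < α) (hαβ : α < β) (hβ : β < 1)
    (hab : 0 ≤ α + β) :
    Real.sqrt (Real.sqrt ((1+α)*(1-β)/((1-α)*(1+β)))) /
        (1 + Real.sqrt ((1+α)*(1-β)/((1-α)*(1+β)))) ≥
      (1/2) * Real.sqrt (1 - β^2) :=
  lower_bound_comparison_general α β hαβ hβ hab
end
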